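/- arXiv:2106.13034 — 3 statements merged into one kernel-verified Lean document; each statement's English description precedes it below -/
import Mathlib

section
/- Invariance of the CPD condition number under Tucker compression (Theorem 5.1 for canonical polyadic decomposition). Fix D ≥ 1, R ≥ 1 and dimensions 1 ≤ m_d ≤ n_d. For r = 1,…,R let u_d^r ∈ ℝ^{m_d} be unit vectors, and let Q_d ∈ ℝ^{n_d×m_d} have orthonormal columns (so each Q_du_d^r is a unit vector in ℝ^{n_d}). Let T_G be the matrix whose columns are, for r = 1,…,R: the vector u₁^r⊗⋯⊗u_D^r, together with, for each d = 1,…,D and each i = 1,…,m_d−1, the vector u₁^r⊗⋯⊗u_{d−1}^r⊗(W_d^r e_i)⊗u_{d+1}^r⊗⋯⊗u_D^r, where W_d^r ∈ ℝ^{m_d×(m_d−1)} is any matrix with orthonormal columns satisfying (u_d^r)ᵀW_d^r = 0. Let T_A be the analogous matrix built from the unit vectors Q_du_d^r ∈ ℝ^{n_d} with any matrices Z_d^r ∈ ℝ^{n_d×(n_d−1)} having orthonormal columns orthogonal to Q_du_d^r. Then σ_min(T_A) = σ_min(T_G); that is, the condition number κ^CPD := 1/σ_min(Terracini matrix) of a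 canonical polyadic decomposition is invariant under Tucker compression by (Q₁,…,Q_D). -/
open scoped BigOperators
open Matrix

noncomputable section

/-- Euclidean norm of a finitely-indexed real vector. -/
def vecEnorm {ι : Type*} [Fintype ι] (x : ι → ℝ) : ℝ := Real.sqrt (∑ i, x i ^ 2)

/-- Smallest singular value of a real matrix, as the infimum of `‖M x‖` over
Euclidean-unit vectors `x`. -/
def sigmaMin {ι κ : Type*} [Fintype ι] [Fintype κ] (M : Matrix ι κ ℝ) : ℝ :=
  sInf { r | ∃ x : κ → ℝ, vecEnorm x = 1 ∧ r = vecEnorm (M.mulVec x) }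

/-- The Terracini block of a rank-one term `u₁ ⊗ ⋯ ⊗ u_D`: one column
`u₁⊗⋯⊗u_D` plus, for each mode `d` and each column `i` of the orthonormal
complement `W_d` of `u_d`, the column `u₁⊗⋯⊗(W_d e_i)⊗⋯⊗u_D`. -/
def cpdTerracini {D : ℕ} {m : Fin D → ℕ} (u : ∀ d, Fin (m d) → ℝ)
    (W : ∀ d, Matrix (Fin (m d)) (Fin (m d - 1)) ℝ) :
    Matrix (∀ d, Fin (m d)) (Unit ⊕ Σ d : Fin D, Fin (m d - 1)) ℝ :=
  Matrix.of fun a col =>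
    Sum.elim
      (fun _ => ∏ d, u d (a d))
      (fun p => ∏ d, (Function.update u p.1 (fun b => W p.1 b p.2)) d (a d))
      col

/-- Concatenation over `r = 1,…,R` of the rank-one Terracini blocks: the Terracini
matrix of a canonical polyadic decomposition. -/
def cpdTerraciniConcat {D R : ℕ} {m : Fin D → ℕ}
    (u : ∀ _ : Fin R, ∀ d, Fin (m d) → ℝ)
    (W : ∀ _ : Fin R, ∀ d, Matrix (Fin (m d)) (Fin (m d - 1)) ℝ) :
    Matrix (∀ d, Fin (m d)) (Fin R × (Unit ⊕ Σ d : Fin D, Fin (m d - 1))) ℝ :=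
  Matrix.of fun a p => cpdTerracini (u p.1) (W p.1) a p.2

/-!
In orthonormal coordinates the Terracini matrix of `u` is the tangent map
`(λ, y) ↦ ∑ r, (λ r • ⊗ u r + ∑ d, ⊗ (u r)[d ← y r d])` of the decomposition, restricted to the
directions `y r d ⊥ u r d`; so `c ≤ σ_min` says exactly that this map is bounded below by `c`
(`IsCpdTangentLowerBound`), whatever the chosen complements `W`.

Applying `⊗ Q_d` maps the tangent map of `u` at `(λ, y)` isometrically to that of `Q u` at
`(λ, Q y)`, which gives one inequality. Conversely, a direction `y r d ⊥ Q_d u r d` splits as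
`Q_d y' + y⊥` with `Q_dᵀ y⊥ = 0`. The `y⊥`-parts of different modes are orthogonal to each other
and to the range of `⊗ Q_d`, and the part of mode `d` is bounded below by `c` because its Gram
matrix `∏_{d' ≠ d} ⟪u r d', u s d'⟫` is also that of the variations `(u r)[d ← z]` of `u` itself.
-/

open Function

section DotProduct

variable {ι κ : Type*} [Fintype ι] [Fintype κ]

lemma dotProduct_self_nonneg (x : κ → ℝ) : 0 ≤ x ⬝ᵥ x :=
  Finset.sum_nonneg fun i _ => mul_self_nonneg (x i)

lemma mulVec_dotProduct_mulVec_of_transpose_mul_self [DecidableEq κ] {M : Matrix ι κ ℝ}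
    (hM : Mᵀ * M = 1) (x y : κ → ℝ) : M *ᵥ x ⬝ᵥ M *ᵥ y = x ⬝ᵥ y := by
  rw [dotProduct_mulVec, ← mulVec_transpose, mulVec_mulVec, hM, one_mulVec]

lemma transpose_mulVec_sub_mulVec_transpose_mulVec [DecidableEq κ] {M : Matrix ι κ ℝ}
    (hM : Mᵀ * M = 1) (y : ι → ℝ) : Mᵀ *ᵥ (y - M *ᵥ (Mᵀ *ᵥ y)) = 0 := by
  rw [mulVec_sub, mulVec_mulVec _ Mᵀ M, hM, one_mulVec, sub_self]

lemma dotProduct_self_eq_transpose_mulVec_add [DecidableEq κ] {M : Matrix ι κ ℝ}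
    (hM : Mᵀ * M = 1) (y : ι → ℝ) :
    y ⬝ᵥ y = Mᵀ *ᵥ y ⬝ᵥ Mᵀ *ᵥ y + (y - M *ᵥ (Mᵀ *ᵥ y)) ⬝ᵥ (y - M *ᵥ (Mᵀ *ᵥ y)) := by
  have hperp : (y - M *ᵥ (Mᵀ *ᵥ y)) ⬝ᵥ M *ᵥ (Mᵀ *ᵥ y) = 0 := by
    rw [dotProduct_mulVec, ← mulVec_transpose, transpose_mulVec_sub_mulVec_transpose_mulVec hM,
      zero_dotProduct]
  conv_lhs => rw [← add_sub_cancel (M *ᵥ (Mᵀ *ᵥ y)) y]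
  rw [add_dotProduct, dotProduct_add, dotProduct_add,
    dotProduct_comm (M *ᵥ (Mᵀ *ᵥ y)) (y - M *ᵥ (Mᵀ *ᵥ y)), hperp,
    mulVec_dotProduct_mulVec_of_transpose_mul_self hM]
  ring

lemma add_sum_dotProduct_self {a : κ → ℝ} {s : ι → κ → ℝ} (ha : ∀ i, a ⬝ᵥ s i = 0)
    (hs : Pairwise fun i j => s i ⬝ᵥ s j = 0) :
    (a + ∑ i, s i) ⬝ᵥ (a + ∑ i, s i) = a ⬝ᵥ a + ∑ i, s i ⬝ᵥ s i := by
  have hdiag (i : ι) : s i ⬝ᵥ ∑ j, s j = s i ⬝ᵥ s i := by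
    rw [dotProduct_sum, Finset.sum_eq_single i (fun j _ hj => hs hj.symm) (by simp)]
  have ha' : a ⬝ᵥ ∑ i, s i = 0 := by simp only [dotProduct_sum, ha, Finset.sum_const_zero]
  rw [add_dotProduct, dotProduct_add, dotProduct_add, ha', dotProduct_comm (∑ i, s i) a, ha',
    sum_dotProduct]
  simp only [hdiag, add_zero, zero_add]

end DotProduct

lemma mul_transpose_add_vecMulVec_eq_one {N : ℕ} {v : Fin N → ℝ} (hv : v ⬝ᵥ v = 1)
    {C : Matrix (Fin N) (Fin (N - 1)) ℝ} (hC : Cᵀ * C = 1) (hvC : v ᵥ* C = 0) :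
    C * Cᵀ + vecMulVec v v = 1 := by
  have hN : 1 ≤ N := Nat.one_le_iff_ne_zero.mpr fun h => by subst h; simp at hv
  have hCv : Cᵀ *ᵥ v = 0 := by rw [mulVec_transpose, hvC]
  have hvv : replicateRow (Fin 1) v * replicateCol (Fin 1) v = 1 := by
    ext i j
    rw [replicateRow_mul_replicateCol_apply, hv, Subsingleton.elim i j, one_apply_eq]
  have hblocks :
      fromRows Cᵀ (replicateRow (Fin 1) v) * fromCols C (replicateCol (Fin 1) v) = 1 := by
    rw [fromRows_mul_fromCols, hC, ← replicateCol_mulVec, hCv, ← replicateRow_vecMul, hvC, hvv,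
      replicateCol_zero, replicateRow_zero, fromBlocks_one]
  -- `fromCols C v` is square, so its orthonormal columns also have orthonormal rows
  rw [← fromCols_mul_fromRows_eq_one_comm
    ((finCongr (Nat.sub_add_cancel hN).symm).trans finSumFinEquiv.symm), fromCols_mul_fromRows]
    at hblocks
  rwa [vecMulVec_eq (Fin 1)]

lemma mulVec_transpose_mulVec_of_dotProduct_eq_zero {N : ℕ} {v : Fin N → ℝ} (hv : v ⬝ᵥ v = 1)
    {C : Matrix (Fin N) (Fin (N - 1)) ℝ} (hC : Cᵀ * C = 1) (hvC : v ᵥ* C = 0) {y : Fin N → ℝ}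
    (hy : v ⬝ᵥ y = 0) : C *ᵥ (Cᵀ *ᵥ y) = y := by
  have := congrArg (· *ᵥ y) (mul_transpose_add_vecMulVec_eq_one hv hC hvC)
  simpa only [add_mulVec, ← mulVec_mulVec, vecMulVec_mulVec, hy, MulOpposite.op_zero, zero_smul,
    add_zero, one_mulVec] using this

section SigmaMin

variable {ι κ : Type*} [Fintype ι] [Fintype κ]

lemma vecEnorm_eq_sqrt_dotProduct (x : κ → ℝ) : vecEnorm x = √(x ⬝ᵥ x) := by
  simp only [vecEnorm, dotProduct, sq]

lemma vecEnorm_nonneg (x : κ → ℝ) : 0 ≤ vecEnorm x := Real.sqrt_nonneg _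

lemma sq_vecEnorm (x : κ → ℝ) : vecEnorm x ^ 2 = x ⬝ᵥ x := by
  rw [vecEnorm_eq_sqrt_dotProduct, Real.sq_sqrt (dotProduct_self_nonneg x)]

lemma vecEnorm_smul (t : ℝ) (x : κ → ℝ) : vecEnorm (t • x) = |t| * vecEnorm x := by
  simp only [vecEnorm_eq_sqrt_dotProduct, dotProduct_smul, smul_dotProduct, smul_eq_mul,
    ← mul_assoc, Real.sqrt_mul (mul_self_nonneg t), Real.sqrt_mul_self_eq_abs]

lemma sigmaMin_nonneg (M : Matrix ι κ ℝ) : 0 ≤ sigmaMin M :=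
  Real.sInf_nonneg fun _ ⟨_, _, hr⟩ => hr ▸ vecEnorm_nonneg _

lemma le_sigmaMin_iff [Nonempty κ] {M : Matrix ι κ ℝ} {c : ℝ} (hc : 0 ≤ c) :
    c ≤ sigmaMin M ↔ ∀ x, c ^ 2 * (x ⬝ᵥ x) ≤ M *ᵥ x ⬝ᵥ M *ᵥ x := by
  have hbdd : BddBelow {r | ∃ x : κ → ℝ, vecEnorm x = 1 ∧ r = vecEnorm (M *ᵥ x)} :=
    ⟨0, fun _ ⟨_, _, hr⟩ => hr ▸ vecEnorm_nonneg _⟩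
  constructor
  · intro h x
    rw [← sq_vecEnorm, ← sq_vecEnorm, ← mul_pow]
    refine pow_le_pow_left₀ (mul_nonneg hc (vecEnorm_nonneg x)) ?_ 2
    rcases (vecEnorm_nonneg x).eq_or_lt' with hx | hx
    · rw [hx, mul_zero]
      exact vecEnorm_nonneg _
    have hunit : vecEnorm ((vecEnorm x)⁻¹ • x) = 1 := by
      rw [vecEnorm_smul, abs_inv, abs_of_pos hx, inv_mul_cancel₀ hx.ne']
    have := h.trans (csInf_le hbdd ⟨_, hunit, rfl⟩)
    rwa [mulVec_smul, vecEnorm_smul, abs_inv, abs_of_pos hx, inv_mul_eq_div,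
      le_div_iff₀ hx] at this
  · intro h
    classical
    obtain ⟨k⟩ := ‹Nonempty κ›
    refine le_csInf ⟨_, Pi.single k 1, ?_, rfl⟩ ?_
    · simp [vecEnorm_eq_sqrt_dotProduct]
    rintro _ ⟨x, hx, rfl⟩
    rw [vecEnorm_eq_sqrt_dotProduct]
    refine Real.le_sqrt_of_sq_le ?_
    simpa [← sq_vecEnorm x, hx] using h x

end SigmaMin

section Tensor

variable {ι : Type*} [Fintype ι] {α β γ : ι → Type*}

def tprodVec : MultilinearMap ℝ (fun i => α i → ℝ) ((∀ i, α i) → ℝ) :=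
  MultilinearMap.pi fun a =>
    (MultilinearMap.mkPiAlgebra ℝ ι ℝ).compLinearMap fun i => LinearMap.proj (a i)

lemma tprodVec_apply (f : ∀ i, α i → ℝ) (a : ∀ i, α i) : tprodVec f a = ∏ i, f i (a i) := rfl

def piKron (Q : ∀ i, Matrix (β i) (α i) ℝ) : Matrix (∀ i, β i) (∀ i, α i) ℝ :=
  of fun a b => ∏ i, Q i (a i) (b i)

lemma transpose_piKron (Q : ∀ i, Matrix (β i) (α i) ℝ) :
    (piKron Q)ᵀ = piKron fun i => (Q i)ᵀ := rfl

lemma piKron_one [∀ i, DecidableEq (α i)] :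
    piKron (fun i => (1 : Matrix (α i) (α i) ℝ)) = 1 := by
  ext a b
  simp only [piKron, of_apply, one_apply, Finset.prod_boole, Finset.mem_univ, true_implies,
    funext_iff]

variable [DecidableEq ι]

lemma dotProduct_tprodVec [∀ i, Fintype (α i)] (f g : ∀ i, α i → ℝ) :
    tprodVec f ⬝ᵥ tprodVec g = ∏ i, f i ⬝ᵥ g i := by
  simp only [dotProduct, tprodVec_apply, ← Finset.prod_mul_distrib, Fintype.prod_sum]

lemma tprodVec_update_apply (f : ∀ i, α i → ℝ) (i : ι) (x : α i → ℝ) (a : ∀ i, α i) :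
    tprodVec (update f i x) a = x (a i) * ∏ j ∈ Finset.univ.erase i, f j (a j) := by
  rw [tprodVec_apply, ← Finset.mul_prod_erase _ _ (Finset.mem_univ i), update_self]
  congr 1
  exact Finset.prod_congr rfl fun j hj => by rw [update_of_ne (Finset.ne_of_mem_erase hj)]

lemma piKron_mulVec_tprodVec [∀ i, Fintype (α i)] (Q : ∀ i, Matrix (β i) (α i) ℝ)
    (f : ∀ i, α i → ℝ) : piKron Q *ᵥ tprodVec f = tprodVec fun i => Q i *ᵥ f i := by
  ext a
  simp only [mulVec, dotProduct, piKron, of_apply, tprodVec_apply, ← Finset.prod_mul_distrib,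
    Fintype.prod_sum]

lemma piKron_mul_piKron [∀ i, Fintype (β i)] (P : ∀ i, Matrix (γ i) (β i) ℝ)
    (Q : ∀ i, Matrix (β i) (α i) ℝ) : piKron P * piKron Q = piKron fun i => P i * Q i := by
  ext a c
  simp only [mul_apply, piKron, of_apply, ← Finset.prod_mul_distrib, Fintype.prod_sum]

lemma transpose_piKron_mul_self [∀ i, Fintype (β i)] [∀ i, DecidableEq (α i)]
    {Q : ∀ i, Matrix (β i) (α i) ℝ} (hQ : ∀ i, (Q i)ᵀ * Q i = 1) :
    (piKron Q)ᵀ * piKron Q = 1 := by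
  rw [transpose_piKron, piKron_mul_piKron, funext hQ, piKron_one]

end Tensor

section Tangent

variable {ρ ι : Type*} [Fintype ρ] [Fintype ι] [DecidableEq ι] {α β : ι → Type*}

def cpdTangent (v : ρ → ∀ i, α i → ℝ) (l : ρ → ℝ) (y : ρ → ∀ i, α i → ℝ) :
    (∀ i, α i) → ℝ :=
  ∑ r, (l r • tprodVec (v r) + ∑ i, tprodVec (update (v r) i (y r i)))

lemma cpdTangent_add_right (v : ρ → ∀ i, α i → ℝ) (l : ρ → ℝ) (y y' : ρ → ∀ i, α i → ℝ) :
    cpdTangent v l (y + y') =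
      cpdTangent v l y + ∑ i, ∑ r, tprodVec (update (v r) i (y' r i)) := by
  simp only [cpdTangent, Pi.add_apply, MultilinearMap.map_update_add, Finset.sum_add_distrib,
    add_assoc]
  rw [Finset.sum_comm (s := Finset.univ (α := ι))]

variable [∀ i, Fintype (α i)]

def IsCpdTangentLowerBound (v : ρ → ∀ i, α i → ℝ) (c : ℝ) : Prop :=
  ∀ l y, (∀ r i, v r i ⬝ᵥ y r i = 0) →
    c ^ 2 * (l ⬝ᵥ l + ∑ r, ∑ i, y r i ⬝ᵥ y r i) ≤ cpdTangent v l y ⬝ᵥ cpdTangent v l y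

lemma piKron_mulVec_cpdTangent (Q : ∀ i, Matrix (β i) (α i) ℝ) (v : ρ → ∀ i, α i → ℝ)
    (l : ρ → ℝ) (y : ρ → ∀ i, α i → ℝ) :
    piKron Q *ᵥ cpdTangent v l y =
      cpdTangent (fun r i => Q i *ᵥ v r i) l (fun r i => Q i *ᵥ y r i) := by
  have hupdate (r : ρ) (i : ι) : (fun j => Q j *ᵥ update (v r) i (y r i) j) =
      update (fun j => Q j *ᵥ v r j) i (Q i *ᵥ y r i) :=
    funext fun j => apply_update (fun k => (Q k *ᵥ ·)) (v r) i (y r i) j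
  simp only [cpdTangent, mulVec_sum, mulVec_add, mulVec_smul, piKron_mulVec_tprodVec, hupdate]

lemma dotProduct_sum_tprodVec_update (v : ρ → ∀ i, α i → ℝ) (d : ι) (w : ρ → α d → ℝ) :
    (∑ r, tprodVec (update (v r) d (w r))) ⬝ᵥ ∑ r, tprodVec (update (v r) d (w r)) =
      ∑ r, ∑ s, (w r ⬝ᵥ w s) * ∏ i ∈ Finset.univ.erase d, v r i ⬝ᵥ v s i := by
  rw [sum_dotProduct]
  simp only [dotProduct_sum, dotProduct_tprodVec]
  refine Finset.sum_congr rfl fun r _ => Finset.sum_congr rfl fun s _ => ?_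
  rw [← Finset.mul_prod_erase _ _ (Finset.mem_univ d), update_self, update_self]
  congr 1
  refine Finset.prod_congr rfl fun i hi => ?_
  simp only [update_of_ne (Finset.ne_of_mem_erase hi)]

variable {v : ρ → ∀ i, α i → ℝ} {c : ℝ}

lemma IsCpdTangentLowerBound.sq_mul_le_slot (h : IsCpdTangentLowerBound v c) {d : ι}
    (hv : ∀ r, v r d ⬝ᵥ v r d = 1) (w : ρ → α d → ℝ) :
    c ^ 2 * ∑ r, w r ⬝ᵥ w r ≤
      (∑ r, tprodVec (update (v r) d (w r))) ⬝ᵥ ∑ r, tprodVec (update (v r) d (w r)) := by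
  set l : ρ → ℝ := fun r => v r d ⬝ᵥ w r
  set y : ρ → ∀ i, α i → ℝ := fun r => Pi.single d (w r - l r • v r d)
  have hy_ne (r : ρ) {i : ι} (hi : i ≠ d) : y r i = 0 := Pi.single_eq_of_ne hi _
  have htangent : cpdTangent v l y = ∑ r, tprodVec (update (v r) d (w r)) := by
    refine Finset.sum_congr rfl fun r _ => ?_
    rw [Finset.sum_eq_single d (fun i _ hi => by rw [hy_ne r hi, MultilinearMap.map_update_zero])
      (by simp)]
    simp only [y, Pi.single_eq_same, MultilinearMap.map_update_sub,
      MultilinearMap.map_update_smul, update_eq_self]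
    abel
  have hy_norm (r : ρ) : ∑ i, y r i ⬝ᵥ y r i = w r ⬝ᵥ w r - l r * l r := by
    rw [Finset.sum_eq_single d (fun i _ hi => by rw [hy_ne r hi, zero_dotProduct]) (by simp)]
    simp only [y, Pi.single_eq_same, dotProduct_sub, sub_dotProduct, dotProduct_smul,
      smul_dotProduct, smul_eq_mul, hv, l, dotProduct_comm (w r) (v r d)]
    ring
  have hy_orth (r : ρ) (i : ι) : v r i ⬝ᵥ y r i = 0 := by
    rcases eq_or_ne i d with rfl | hi
    · simp only [y, Pi.single_eq_same, dotProduct_sub, dotProduct_smul, smul_eq_mul, hv, l]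
      ring
    · rw [hy_ne r hi, dotProduct_zero]
  have hnorm : l ⬝ᵥ l + ∑ r, ∑ i, y r i ⬝ᵥ y r i = ∑ r, w r ⬝ᵥ w r := by
    rw [show l ⬝ᵥ l = ∑ r, l r * l r from rfl, ← Finset.sum_add_distrib]
    simp only [hy_norm, add_sub_cancel]
  simpa only [hnorm, htangent] using h l y hy_orth

variable [∀ i, Fintype (β i)] [∀ i, DecidableEq (α i)] {Q : ∀ i, Matrix (β i) (α i) ℝ}

lemma IsCpdTangentLowerBound.sq_mul_le_slot_tucker (h : IsCpdTangentLowerBound v c)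
    (hQ : ∀ i, (Q i)ᵀ * Q i = 1) {d : ι} (hv : ∀ r, v r d ⬝ᵥ v r d = 1) (w : ρ → β d → ℝ) :
    c ^ 2 * ∑ r, w r ⬝ᵥ w r ≤
      (∑ r, tprodVec (update (fun i => Q i *ᵥ v r i) d (w r))) ⬝ᵥ
        ∑ r, tprodVec (update (fun i => Q i *ᵥ v r i) d (w r)) := by
  rcases isEmpty_or_nonempty ρ with hρ | ⟨⟨r₀⟩⟩
  · simp
  set G : ρ → ρ → ℝ := fun r s => ∏ i ∈ Finset.univ.erase d, v r i ⬝ᵥ v s i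
  -- coordinate `k` of the mode-`d` vectors, carried by the unit vector `v r₀ d`
  have hslot (k : β d) :
      c ^ 2 * ∑ r, w r k * w r k ≤ ∑ r, ∑ s, w r k * w s k * G r s := by
    have := h.sq_mul_le_slot hv fun r => w r k • v r₀ d
    simp only [dotProduct_sum_tprodVec_update, smul_dotProduct, dotProduct_smul, hv r₀,
      smul_eq_mul, mul_one] at this
    exact this.trans_eq (Finset.sum_congr rfl fun r _ => Finset.sum_congr rfl fun s _ => by ring)
  rw [dotProduct_sum_tprodVec_update]
  simp only [mulVec_dotProduct_mulVec_of_transpose_mul_self (hQ _)]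
  calc c ^ 2 * ∑ r, w r ⬝ᵥ w r = ∑ k, c ^ 2 * ∑ r, w r k * w r k := by
        simp only [dotProduct, ← Finset.mul_sum]
        rw [Finset.sum_comm]
    _ ≤ ∑ k, ∑ r, ∑ s, w r k * w s k * G r s := Finset.sum_le_sum fun k _ => hslot k
    _ = ∑ r, ∑ s, (w r ⬝ᵥ w s) * G r s := by
        simp only [dotProduct, Finset.sum_mul]
        rw [Finset.sum_comm]
        exact Finset.sum_congr rfl fun r _ => Finset.sum_comm

lemma IsCpdTangentLowerBound.of_tucker (hQ : ∀ i, (Q i)ᵀ * Q i = 1)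
    (h : IsCpdTangentLowerBound (fun r i => Q i *ᵥ v r i) c) : IsCpdTangentLowerBound v c := by
  intro l y hy
  have := h l (fun r i => Q i *ᵥ y r i) fun r i => by
    rw [mulVec_dotProduct_mulVec_of_transpose_mul_self (hQ i), hy]
  simpa only [← piKron_mulVec_cpdTangent, mulVec_dotProduct_mulVec_of_transpose_mul_self (hQ _),
    mulVec_dotProduct_mulVec_of_transpose_mul_self (transpose_piKron_mul_self hQ)] using this

lemma dotProduct_self_cpdTangent_tucker (hQ : ∀ i, (Q i)ᵀ * Q i = 1) (l : ρ → ℝ)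
    (y : ρ → ∀ i, α i → ℝ) (z : ρ → ∀ i, β i → ℝ) (hz : ∀ r i, (Q i)ᵀ *ᵥ z r i = 0) :
    cpdTangent (fun r i => Q i *ᵥ v r i) l ((fun r i => Q i *ᵥ y r i) + z) ⬝ᵥ
        cpdTangent (fun r i => Q i *ᵥ v r i) l ((fun r i => Q i *ᵥ y r i) + z) =
      cpdTangent v l y ⬝ᵥ cpdTangent v l y +
        ∑ d, (∑ r, tprodVec (update (fun i => Q i *ᵥ v r i) d (z r d))) ⬝ᵥ
          ∑ r, tprodVec (update (fun i => Q i *ᵥ v r i) d (z r d)) := by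
  set S : ι → (∀ i, β i) → ℝ :=
    fun d => ∑ r, tprodVec (update (fun i => Q i *ᵥ v r i) d (z r d))
  have hz_perp (r : ρ) (i : ι) (x : α i → ℝ) : z r i ⬝ᵥ Q i *ᵥ x = 0 := by
    rw [dotProduct_mulVec, ← mulVec_transpose, hz, zero_dotProduct]
  have horth_range (t : (∀ i, α i) → ℝ) (d : ι) : piKron Q *ᵥ t ⬝ᵥ S d = 0 := by
    suffices (piKron Q)ᵀ *ᵥ S d = 0 by
      rw [dotProduct_comm, dotProduct_mulVec, ← mulVec_transpose, this, zero_dotProduct]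
    simp only [S, mulVec_sum, transpose_piKron, piKron_mulVec_tprodVec]
    exact Finset.sum_eq_zero fun r _ =>
      MultilinearMap.map_coord_zero _ d (by rw [update_self, hz])
  have horth_modes : Pairwise fun d e => S d ⬝ᵥ S e = 0 := by
    intro d e hde
    simp only [S]
    rw [sum_dotProduct]
    simp only [dotProduct_sum, dotProduct_tprodVec]
    refine Finset.sum_eq_zero fun r _ => Finset.sum_eq_zero fun s _ =>
      Finset.prod_eq_zero (Finset.mem_univ d) ?_
    rw [update_self, update_of_ne hde, hz_perp]
  rw [cpdTangent_add_right, ← piKron_mulVec_cpdTangent,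
    add_sum_dotProduct_self (horth_range _) horth_modes,
    mulVec_dotProduct_mulVec_of_transpose_mul_self (transpose_piKron_mul_self hQ)]

lemma IsCpdTangentLowerBound.tucker (hQ : ∀ i, (Q i)ᵀ * Q i = 1)
    (hv : ∀ r i, v r i ⬝ᵥ v r i = 1) (h : IsCpdTangentLowerBound v c) :
    IsCpdTangentLowerBound (fun r i => Q i *ᵥ v r i) c := by
  intro l y hy
  set y' : ρ → ∀ i, α i → ℝ := fun r i => (Q i)ᵀ *ᵥ y r i
  set z : ρ → ∀ i, β i → ℝ := fun r i => y r i - Q i *ᵥ y' r i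
  have hy' (r : ρ) (i : ι) : v r i ⬝ᵥ y' r i = 0 := by
    rw [dotProduct_mulVec, vecMul_transpose, hy]
  have hsplit := dotProduct_self_cpdTangent_tucker (v := v) hQ l y' z
    fun r i => transpose_mulVec_sub_mulVec_transpose_mulVec (hQ i) (y r i)
  rw [show (fun r i => Q i *ᵥ y' r i) + z = y by ext; simp [z]] at hsplit
  rw [hsplit]
  calc c ^ 2 * (l ⬝ᵥ l + ∑ r, ∑ i, y r i ⬝ᵥ y r i)
      = c ^ 2 * (l ⬝ᵥ l + ∑ r, ∑ i, y' r i ⬝ᵥ y' r i) + ∑ d, c ^ 2 * ∑ r, z r d ⬝ᵥ z r d := by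
        simp only [fun r i => dotProduct_self_eq_transpose_mulVec_add (hQ i) (y r i),
          Finset.sum_add_distrib, mul_add, Finset.mul_sum, add_assoc]
        rw [Finset.sum_comm (s := Finset.univ (α := ι))]
    _ ≤ _ := add_le_add (h l y' hy')
          (Finset.sum_le_sum fun d _ => h.sq_mul_le_slot_tucker hQ (fun r => hv r d) _)

end Tangent
section Terracini

variable {D R : ℕ} {m : Fin D → ℕ}

lemma sum_terraciniIndex {E : Type*} [AddCommMonoid E]
    (g : Fin R × (Unit ⊕ Σ d : Fin D, Fin (m d - 1)) → E) :
    ∑ p, g p = ∑ r, (g (r, .inl ()) + ∑ d, ∑ i, g (r, .inr ⟨d, i⟩)) := by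
  simp only [Fintype.sum_prod_type, Fintype.sum_sum_type, Fintype.sum_unique,
    Fintype.sum_sigma]

lemma dotProduct_self_terraciniIndex (x : Fin R × (Unit ⊕ Σ d : Fin D, Fin (m d - 1)) → ℝ) :
    x ⬝ᵥ x = (fun r => x (r, .inl ())) ⬝ᵥ (fun r => x (r, .inl ())) +
      ∑ r, ∑ d, (fun i => x (r, .inr ⟨d, i⟩)) ⬝ᵥ fun i => x (r, .inr ⟨d, i⟩) := by
  simp only [dotProduct, sum_terraciniIndex (fun p => x p * x p), Finset.sum_add_distrib]

lemma cpdTerraciniConcat_apply_inl (u : Fin R → ∀ d, Fin (m d) → ℝ)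
    (W : Fin R → ∀ d, Matrix (Fin (m d)) (Fin (m d - 1)) ℝ) (a : ∀ d, Fin (m d)) (r : Fin R) :
    cpdTerraciniConcat u W a (r, .inl ()) = tprodVec (u r) a := rfl

lemma cpdTerraciniConcat_apply_inr (u : Fin R → ∀ d, Fin (m d) → ℝ)
    (W : Fin R → ∀ d, Matrix (Fin (m d)) (Fin (m d - 1)) ℝ) (a : ∀ d, Fin (m d)) (r : Fin R)
    (d : Fin D) (i : Fin (m d - 1)) :
    cpdTerraciniConcat u W a (r, .inr ⟨d, i⟩) = tprodVec (update (u r) d fun b => W r d b i) a :=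
  rfl

lemma cpdTerraciniConcat_mulVec (u : Fin R → ∀ d, Fin (m d) → ℝ)
    (W : Fin R → ∀ d, Matrix (Fin (m d)) (Fin (m d - 1)) ℝ)
    (x : Fin R × (Unit ⊕ Σ d : Fin D, Fin (m d - 1)) → ℝ) :
    cpdTerraciniConcat u W *ᵥ x =
      cpdTangent u (fun r => x (r, .inl ())) fun r d => W r d *ᵥ fun i => x (r, .inr ⟨d, i⟩) := by
  ext a
  simp only [mulVec, dotProduct, sum_terraciniIndex, cpdTerraciniConcat_apply_inl,
    cpdTerraciniConcat_apply_inr, cpdTangent, Finset.sum_apply, Pi.add_apply, Pi.smul_apply,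
    smul_eq_mul, tprodVec_update_apply, Finset.sum_mul]
  refine Finset.sum_congr rfl fun r _ => ?_
  congr 1
  · ring
  · exact Finset.sum_congr rfl fun d _ => Finset.sum_congr rfl fun i _ => by ring

lemma le_sigmaMin_cpdTerraciniConcat_iff [NeZero R]
    {u : Fin R → ∀ d, Fin (m d) → ℝ} {W : Fin R → ∀ d, Matrix (Fin (m d)) (Fin (m d - 1)) ℝ}
    (hu : ∀ r d, u r d ⬝ᵥ u r d = 1) (hW : ∀ r d, (W r d)ᵀ * W r d = 1)
    (huW : ∀ r d, u r d ᵥ* W r d = 0) {c : ℝ} (hc : 0 ≤ c) :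
    c ≤ sigmaMin (cpdTerraciniConcat u W) ↔ IsCpdTangentLowerBound u c := by
  rw [le_sigmaMin_iff hc]
  constructor
  · intro h l y hy
    have hWWy (r : Fin R) (d : Fin D) : W r d *ᵥ ((W r d)ᵀ *ᵥ y r d) = y r d :=
      mulVec_transpose_mulVec_of_dotProduct_eq_zero (hu r d) (hW r d) (huW r d) (hy r d)
    have hnorm (r : Fin R) (d : Fin D) :
        (W r d)ᵀ *ᵥ y r d ⬝ᵥ (W r d)ᵀ *ᵥ y r d = y r d ⬝ᵥ y r d := by
      conv_rhs => rw [← hWWy r d]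
      rw [mulVec_dotProduct_mulVec_of_transpose_mul_self (hW r d)]
    have hx := h fun p => Sum.elim (fun _ => l p.1) (fun q => ((W p.1 q.1)ᵀ *ᵥ y p.1 q.1) q.2) p.2
    rw [cpdTerraciniConcat_mulVec, dotProduct_self_terraciniIndex] at hx
    simpa only [Sum.elim_inl, Sum.elim_inr, hWWy, hnorm] using hx
  · intro h x
    have hWiso (r : Fin R) (d : Fin D) (b : Fin (m d - 1) → ℝ) :
        W r d *ᵥ b ⬝ᵥ W r d *ᵥ b = b ⬝ᵥ b :=
      mulVec_dotProduct_mulVec_of_transpose_mul_self (hW r d) b b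
    have := h (fun r => x (r, .inl ())) (fun r d => W r d *ᵥ fun i => x (r, .inr ⟨d, i⟩))
      fun r d => by rw [dotProduct_mulVec, huW, zero_dotProduct]
    rw [cpdTerraciniConcat_mulVec, dotProduct_self_terraciniIndex]
    simpa only [hWiso] using this

end Terracini

theorem sigmaMin_cpdTerracini_invariant_under_tucker_compression_general
    {D R : ℕ} (hR : 1 ≤ R)
    (m n : Fin D → ℕ)
    -- the unit vectors `u_d^r`
    (u : ∀ _ : Fin R, ∀ d, Fin (m d) → ℝ)
    (hu : ∀ r d, ∑ b, u r d b ^ 2 = 1)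
    -- the Tucker basis `Q_d`, with orthonormal columns
    (Q : ∀ d, Matrix (Fin (n d)) (Fin (m d)) ℝ)
    (hQ : ∀ d, (Q d)ᵀ * Q d = 1)
    -- orthonormal complements `W_d^r` of `u_d^r` in `ℝ^{m_d}`
    (W : ∀ _ : Fin R, ∀ d, Matrix (Fin (m d)) (Fin (m d - 1)) ℝ)
    (hW : ∀ r d, (W r d)ᵀ * W r d = 1)
    (huW : ∀ r d, Matrix.vecMul (u r d) (W r d) = 0)
    -- orthonormal complements `Z_d^r` of `Q_d u_d^r` in `ℝ^{n_d}`
    (Z : ∀ _ : Fin R, ∀ d, Matrix (Fin (n d)) (Fin (n d - 1)) ℝ)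
    (hZ : ∀ r d, (Z r d)ᵀ * Z r d = 1)
    (hQuZ : ∀ r d, Matrix.vecMul ((Q d).mulVec (u r d)) (Z r d) = 0) :
    sigmaMin (cpdTerraciniConcat (fun r d => (Q d).mulVec (u r d)) Z)
      = sigmaMin (cpdTerraciniConcat u W) := by
  have : NeZero R := ⟨Nat.one_le_iff_ne_zero.mp hR⟩
  have hu' (r : Fin R) (d : Fin D) : u r d ⬝ᵥ u r d = 1 := by
    simpa only [dotProduct, sq] using hu r d
  have hQu (r : Fin R) (d : Fin D) : Q d *ᵥ u r d ⬝ᵥ Q d *ᵥ u r d = 1 := by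
    rw [mulVec_dotProduct_mulVec_of_transpose_mul_self (hQ d), hu']
  have le_iff (c : ℝ) (hc : 0 ≤ c) :
      c ≤ sigmaMin (cpdTerraciniConcat (fun r d => Q d *ᵥ u r d) Z) ↔
        c ≤ sigmaMin (cpdTerraciniConcat u W) := by
    rw [le_sigmaMin_cpdTerraciniConcat_iff hQu hZ hQuZ hc,
      le_sigmaMin_cpdTerraciniConcat_iff hu' hW huW hc]
    exact ⟨IsCpdTangentLowerBound.of_tucker hQ, IsCpdTangentLowerBound.tucker hQ hu'⟩
  exact le_antisymm ((le_iff _ (sigmaMin_nonneg _)).1 le_rfl)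
    ((le_iff _ (sigmaMin_nonneg _)).2 le_rfl)

/-- **Theorem 5.1 for the canonical polyadic decomposition.** The smallest singular value
of the CPD Terracini matrix is invariant under Tucker compression: the Terracini matrix
built from the unit vectors `u_d^r ∈ ℝ^{m_d}` (with complements `W_d^r`) and the one
built from the expanded unit vectors `Q_d u_d^r ∈ ℝ^{n_d}` (with complements `Z_d^r`)
have the same smallest singular value; hence `κ^CPD = 1/σ_min` is invariant under
Tucker compression by `(Q₁,…,Q_D)`. -/
theorem sigmaMin_cpdTerracini_invariant_under_tucker_compression
    {D R : ℕ} (hD : 1 ≤ D) (hR : 1 ≤ R)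
    (m n : Fin D → ℕ) (hm : ∀ d, 1 ≤ m d) (hmn : ∀ d, m d ≤ n d)
    -- the unit vectors `u_d^r`
    (u : ∀ _ : Fin R, ∀ d, Fin (m d) → ℝ)
    (hu : ∀ r d, ∑ b, u r d b ^ 2 = 1)
    -- the Tucker basis `Q_d`, with orthonormal columns
    (Q : ∀ d, Matrix (Fin (n d)) (Fin (m d)) ℝ)
    (hQ : ∀ d, (Q d)ᵀ * Q d = 1)
    -- orthonormal complements `W_d^r` of `u_d^r` in `ℝ^{m_d}`
    (W : ∀ _ : Fin R, ∀ d, Matrix (Fin (m d)) (Fin (m d - 1)) ℝ)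
    (hW : ∀ r d, (W r d)ᵀ * W r d = 1)
    (huW : ∀ r d, Matrix.vecMul (u r d) (W r d) = 0)
    -- orthonormal complements `Z_d^r` of `Q_d u_d^r` in `ℝ^{n_d}`
    (Z : ∀ _ : Fin R, ∀ d, Matrix (Fin (n d)) (Fin (n d - 1)) ℝ)
    (hZ : ∀ r d, (Z r d)ᵀ * Z r d = 1)
    (hQuZ : ∀ r d, Matrix.vecMul ((Q d).mulVec (u r d)) (Z r d) = 0) :
    sigmaMin (cpdTerraciniConcat (fun r d => (Q d).mulVec (u r d)) Z)
      = sigmaMin (cpdTerraciniConcat u W) :=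
  sigmaMin_cpdTerracini_invariant_under_tucker_compression_general hR m n u hu Q hQ W hW huW Z hZ
    hQuZ
end
end

section
/- Variant of the Kronecker singular-value identity with the orthogonal factor in an interior tensor slot (Remark 5.4). Let B_k ∈ ℝ^{m₁×p_k} and C_k ∈ ℝ^{m₂×q_k} for k = 1,…,K, set A_k := B_k ⊗ C_k ∈ ℝ^{m₁m₂×p_kq_k}, and let Q_k ∈ ℝ^{p×p} be orthogonal matrices. Then the matrices X := [A₁ … A_K] and Y := [B₁⊗Q₁⊗C₁ … B_K⊗Q_K⊗C_K] have the same singular values up to multiplicities: the nonzero singular values of Y are exactly the nonzero singular values of X, each appearing with multiplicity p. In particular, there exist orthogonal matrices P (of size m₁pm₂) and W (of size (Σ_k p_kq_k)p) with Y = P·(X ⊗ I_p)·W, after the natural identification of index sets. -/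
open scoped BigOperators
open Matrix

noncomputable section

/-- The block-row concatenation `X = [B₁⊗C₁ … B_K⊗C_K]`. -/
def blockRowKron2 {K : ℕ} {m₁ m₂ : ℕ} {p q : Fin K → ℕ}
    (B : ∀ k, Matrix (Fin m₁) (Fin (p k)) ℝ)
    (C : ∀ k, Matrix (Fin m₂) (Fin (q k)) ℝ) :
    Matrix (Fin m₁ × Fin m₂) (Σ k, Fin (p k) × Fin (q k)) ℝ :=
  Matrix.of fun a z => B z.1 a.1 z.2.1 * C z.1 a.2 z.2.2

/-- The block-row concatenation `Y = [B₁⊗Q₁⊗C₁ … B_K⊗Q_K⊗C_K]`, with the orthogonal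
factor in the interior tensor slot. -/
def blockRowKron3 {K : ℕ} {m₁ m₂ r : ℕ} {p q : Fin K → ℕ}
    (B : ∀ k, Matrix (Fin m₁) (Fin (p k)) ℝ)
    (Q : Fin K → Matrix (Fin r) (Fin r) ℝ)
    (C : ∀ k, Matrix (Fin m₂) (Fin (q k)) ℝ) :
    Matrix ((Fin m₁ × Fin r) × Fin m₂) (Σ k, (Fin (p k) × Fin r) × Fin (q k)) ℝ :=
  Matrix.of fun a z => B z.1 a.1.1 z.2.1.1 * Q z.1 a.1.2 z.2.1.2 * C z.1 a.2 z.2.2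

/-- `X ⊗ I_r`, with its row and column index sets identified with those of
`blockRowKron3 B Q C`. -/
def blockRowKron3Id {K : ℕ} {m₁ m₂ r : ℕ} {p q : Fin K → ℕ}
    (B : ∀ k, Matrix (Fin m₁) (Fin (p k)) ℝ)
    (C : ∀ k, Matrix (Fin m₂) (Fin (q k)) ℝ) :
    Matrix ((Fin m₁ × Fin r) × Fin m₂) (Σ k, (Fin (p k) × Fin r) × Fin (q k)) ℝ :=
  Matrix.of fun a z =>
    B z.1 a.1.1 z.2.1.1 * (if a.1.2 = z.2.1.2 then (1 : ℝ) else 0) * C z.1 a.2 z.2.2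

/-!
Column block `k` of `Y` is `(B_k ⊗ Q_k) ⊗ C_k = ((B_k ⊗ I) ⊗ C_k) * ((I ⊗ Q_k) ⊗ I)`, so
`Y = (X ⊗ I_r) * W` up to a permutation of indices, where `W` is the block-diagonal orthogonal
matrix with blocks `(I ⊗ Q_k) ⊗ I`. Hence `YᵀY = Wᵀ ((XᵀX) ⊗ I_r) W` is orthogonally similar to
`(XᵀX) ⊗ I_r`, which is block diagonal with `r` copies of `XᵀX`; and `P = 1` suffices.
-/

open Kronecker

namespace Matrix

variable {l m n o p : Type*}

theorem mul_blockDiagonal'_apply_mk {ι : Type*} [Fintype ι] [DecidableEq ι] {n' : ι → Type*}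
    {p' : ι → Type*} [∀ k, Fintype (n' k)] {α : Type*} [NonUnitalNonAssocSemiring α]
    (M : Matrix l (Σ k, n' k) α) (D : ∀ k, Matrix (n' k) (p' k) α) (i : l) (k : ι) (j : p' k) :
    (M * blockDiagonal' D) i ⟨k, j⟩ = (M.submatrix id (Sigma.mk k) * D k) i j := by
  simp only [mul_apply, Fintype.sum_sigma, submatrix_apply, id]
  rw [Finset.sum_eq_single k]
  · simp only [blockDiagonal'_apply_eq]
  · intro k' _ hk'
    simp only [blockDiagonal'_apply_ne D _ _ hk', mul_zero, Finset.sum_const_zero]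
  · simp

theorem blockDiagonal'_transpose_mul_self {ι : Type*} [Fintype ι] [DecidableEq ι]
    {n' : ι → Type*} [∀ k, Fintype (n' k)] [∀ k, DecidableEq (n' k)] {α : Type*} [Semiring α]
    (D : ∀ k, Matrix (n' k) (n' k) α) (hD : ∀ k, (D k)ᵀ * D k = 1) :
    (blockDiagonal' D)ᵀ * blockDiagonal' D = 1 := by
  rw [blockDiagonal'_transpose, ← blockDiagonal'_mul]
  simp only [hD]
  exact blockDiagonal'_one

theorem kronecker_transpose_mul_kronecker [Fintype l] [Fintype n] {R : Type*} [CommSemiring R]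
    (A : Matrix l m R) (B : Matrix n p R) :
    (A ⊗ₖ B)ᵀ * (A ⊗ₖ B) = (Aᵀ * A) ⊗ₖ (Bᵀ * B) := by
  rw [← kroneckerMap_transpose, mul_kronecker_mul]

theorem charmatrix_blockDiagonal_const [Fintype n] [DecidableEq n] [Fintype o] [DecidableEq o]
    {R : Type*} [CommRing R] (M : Matrix n n R) :
    charmatrix (blockDiagonal fun _ : o => M) = blockDiagonal fun _ : o => charmatrix M := by
  ext ⟨i, a⟩ ⟨j, b⟩
  simp only [charmatrix_apply, blockDiagonal_apply, diagonal_apply, Prod.mk.injEq]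
  split_ifs <;> simp_all

theorem charpoly_kronecker_one [Fintype n] [DecidableEq n] [Fintype o] [DecidableEq o]
    {R : Type*} [CommRing R] (M : Matrix n n R) :
    (M ⊗ₖ (1 : Matrix o o R)).charpoly = M.charpoly ^ Fintype.card o := by
  rw [kronecker_one, charpoly, charmatrix_blockDiagonal_const, det_blockDiagonal,
    Finset.prod_const, Finset.card_univ, charpoly]

theorem charpoly_submatrix_equiv [Fintype n] [DecidableEq n] [Fintype m] [DecidableEq m]
    {R : Type*} [CommRing R] (M : Matrix n n R) (e : m ≃ n) :
    (M.submatrix e e).charpoly = M.charpoly :=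
  charpoly_reindex e.symm M

theorem charpoly_transpose_mul_self_mul_orthogonal [Fintype n] [DecidableEq n] [Fintype m]
    {R : Type*} [CommRing R] (A : Matrix m n R) (W : Matrix n n R) (hW : Wᵀ * W = 1) :
    ((A * W)ᵀ * (A * W)).charpoly = (Aᵀ * A).charpoly := by
  rw [transpose_mul, Matrix.mul_assoc, ← Matrix.mul_assoc Aᵀ, charpoly_mul_comm, Matrix.mul_assoc,
    mul_eq_one_comm.mp hW, Matrix.mul_one]

end Matrix

open Matrix

def prodRightCommEquiv (α β γ : Type*) : (α × β) × γ ≃ (α × γ) × β where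
  toFun x := ((x.1.1, x.2), x.1.2)
  invFun x := ((x.1.1, x.2), x.1.2)
  left_inv _ := rfl
  right_inv _ := rfl

def sigmaProdRightCommEquiv {ι : Type*} (α γ : ι → Type*) (β : Type*) :
    (Σ k, (α k × β) × γ k) ≃ (Σ k, α k × γ k) × β where
  toFun x := (⟨x.1, (x.2.1.1, x.2.2)⟩, x.2.1.2)
  invFun x := ⟨x.1.1, ((x.1.2.1, x.2), x.1.2.2)⟩
  left_inv _ := rfl
  right_inv _ := rfl

section BlockRow

def interiorRotation {K r : ℕ} (p q : Fin K → ℕ) (Q : Fin K → Matrix (Fin r) (Fin r) ℝ) :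
    Matrix (Σ k, (Fin (p k) × Fin r) × Fin (q k)) (Σ k, (Fin (p k) × Fin r) × Fin (q k)) ℝ :=
  blockDiagonal' fun k => ((1 : Matrix (Fin (p k)) (Fin (p k)) ℝ) ⊗ₖ Q k) ⊗ₖ 1

theorem interiorRotation_transpose_mul_self {K r : ℕ} (p q : Fin K → ℕ)
    (Q : Fin K → Matrix (Fin r) (Fin r) ℝ) (hQ : ∀ k, (Q k)ᵀ * Q k = 1) :
    (interiorRotation p q Q)ᵀ * interiorRotation p q Q = 1 :=
  blockDiagonal'_transpose_mul_self _ fun k => by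
    rw [kronecker_transpose_mul_kronecker, kronecker_transpose_mul_kronecker, hQ]
    simp only [transpose_one, Matrix.mul_one, one_kronecker_one]

variable {K m₁ m₂ r : ℕ} {p q : Fin K → ℕ}
  (B : ∀ k, Matrix (Fin m₁) (Fin (p k)) ℝ) (C : ∀ k, Matrix (Fin m₂) (Fin (q k)) ℝ)

theorem blockRowKron3Id_eq_submatrix :
    blockRowKron3Id (r := r) B C =
      (blockRowKron2 B C ⊗ₖ (1 : Matrix (Fin r) (Fin r) ℝ)).submatrix
        (prodRightCommEquiv _ _ _) (sigmaProdRightCommEquiv _ _ _) := by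
  ext ⟨⟨i, s⟩, j⟩ ⟨k, ⟨a, t⟩, b⟩
  simp [blockRowKron3Id, blockRowKron2, prodRightCommEquiv, sigmaProdRightCommEquiv, one_apply]

theorem blockRowKron3Id_transpose_mul_self :
    (blockRowKron3Id (r := r) B C)ᵀ * blockRowKron3Id (r := r) B C =
      (((blockRowKron2 B C)ᵀ * blockRowKron2 B C) ⊗ₖ (1 : Matrix (Fin r) (Fin r) ℝ)).submatrix
        (sigmaProdRightCommEquiv _ _ _) (sigmaProdRightCommEquiv _ _ _) := by
  rw [blockRowKron3Id_eq_submatrix, transpose_submatrix, submatrix_mul_equiv,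
    kronecker_transpose_mul_kronecker, transpose_one, mul_one]

theorem blockRowKron3Id_submatrix_sigmaMk (k : Fin K) :
    (blockRowKron3Id (r := r) B C).submatrix id (Sigma.mk k) =
      (B k ⊗ₖ (1 : Matrix (Fin r) (Fin r) ℝ)) ⊗ₖ C k := by
  ext ⟨⟨i, s⟩, j⟩ ⟨⟨a, t⟩, b⟩
  simp [blockRowKron3Id, one_apply]

theorem blockRowKron3_eq_mul_interiorRotation (Q : Fin K → Matrix (Fin r) (Fin r) ℝ) :
    blockRowKron3 B Q C = blockRowKron3Id (r := r) B C * interiorRotation p q Q := by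
  ext a ⟨k, c⟩
  rw [interiorRotation, mul_blockDiagonal'_apply_mk, blockRowKron3Id_submatrix_sigmaMk,
    ← mul_kronecker_mul, ← mul_kronecker_mul, Matrix.mul_one, Matrix.one_mul, Matrix.mul_one]
  rfl

end BlockRow

/-- **Remark 5.4.** Variant of the Kronecker singular-value identity with the orthogonal
factor `Q_k` in an interior tensor slot: with `A_k := B_k ⊗ C_k`,
`X := [A₁ … A_K]` and `Y := [B₁⊗Q₁⊗C₁ … B_K⊗Q_K⊗C_K]` have the same singular values up
to multiplicities (`charpoly(YᵀY) = charpoly(XᵀX)^r`, so the nonzero singular values of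
`Y` are those of `X`, each with multiplicity `r`); in particular `Y = P·(X⊗I_r)·W` for
some orthogonal `P` and `W`, after the natural identification of index sets. -/
theorem kronecker_singular_value_identity_interior_slot
    {K m₁ m₂ r : ℕ} {p q : Fin K → ℕ}
    (B : ∀ k, Matrix (Fin m₁) (Fin (p k)) ℝ)
    (C : ∀ k, Matrix (Fin m₂) (Fin (q k)) ℝ)
    (Q : Fin K → Matrix (Fin r) (Fin r) ℝ)
    (hQ : ∀ k, (Q k)ᵀ * Q k = 1) :
    ((blockRowKron3 B Q C)ᵀ * blockRowKron3 B Q C).charpoly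
      = ((blockRowKron2 B C)ᵀ * blockRowKron2 B C).charpoly ^ r ∧
    (∃ (P : Matrix ((Fin m₁ × Fin r) × Fin m₂) ((Fin m₁ × Fin r) × Fin m₂) ℝ)
        (W : Matrix (Σ k, (Fin (p k) × Fin r) × Fin (q k))
          (Σ k, (Fin (p k) × Fin r) × Fin (q k)) ℝ),
        Pᵀ * P = 1 ∧ Wᵀ * W = 1 ∧
        blockRowKron3 B Q C = P * blockRowKron3Id (r := r) B C * W) := by
  have hW := interiorRotation_transpose_mul_self p q Q hQ
  have hY := blockRowKron3_eq_mul_interiorRotation B C Q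
  refine ⟨?_, 1, interiorRotation p q Q, by rw [transpose_one, Matrix.mul_one], hW,
    by rw [Matrix.one_mul, hY]⟩
  rw [hY, charpoly_transpose_mul_self_mul_orthogonal _ _ hW, blockRowKron3Id_transpose_mul_self,
    charpoly_submatrix_equiv, charpoly_kronecker_one, Fintype.card_fin]

end
end

section
/- Vertical–horizontal direct sum decomposition (Proposition 3.2, linear-algebra formulation). Fix D ≥ 1 and dimensions n_d ≥ l_d ≥ 1. Let c ∈ ℝ^{l₁⋯l_D}, let 𝒯 ⊆ ℝ^{l₁⋯l_D} be a linear subspace that is GL-saturated at c, let U_d ∈ ℝ^{n_d×l_d} have full column rank, and let U_d^⊥ ∈ ℝ^{n_d×(n_d−l_d)} be such that [U_d U_d^⊥] is an invertible n_d×n_d matrix for each d. Define the subspaces of ℝ^{l₁⋯l_D} × ℝ^{n₁×l₁} × ⋯ × ℝ^{n_D×l_D}: 𝕍 := { ( Σ_{d=1}^D (I⊗⋯⊗Ȧ_d⊗⋯⊗I)c, −U₁Ȧ₁, …, −U_DȦ_D ) : Ȧ_d ∈ ℝ^{l_d×l_d} } (with Ȧ_d in the d-th Kronecker slot) and ℍ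 := { (ċ, U₁^⊥B₁, …, U_D^⊥B_D) : ċ ∈ 𝒯, B_d ∈ ℝ^{(n_d−l_d)×l_d} }. Then 𝕍 ∩ ℍ = {0} and 𝕍 + ℍ = 𝒯 × ℝ^{n₁×l₁} × ⋯ × ℝ^{n_D×l_D}, i.e., 𝕍 ⊕ ℍ = 𝒯 × ∏_d ℝ^{n_d×l_d}. -/
open scoped BigOperators
open Matrix

noncomputable section

/-- Iterated Kronecker product `U 1 ⊗ ⋯ ⊗ U D`, with multi-indices as rows/columns. -/
def bigKron {D : ℕ} {n l : Fin D → ℕ} (U : ∀ d, Matrix (Fin (n d)) (Fin (l d)) ℝ) :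
    Matrix (∀ d, Fin (n d)) (∀ d, Fin (l d)) ℝ :=
  Matrix.of fun i j => ∏ d, U d (i d) (j d)

/-- A linear subspace `𝒯` is GL-saturated at `c`: for every mode `d` and every
`Ȧ ∈ ℝ^{l_d×l_d}`, the vector `(I⊗⋯⊗Ȧ⊗⋯⊗I)c` lies in `𝒯`. -/
def GLSaturated {D : ℕ} {l : Fin D → ℕ} (T : Submodule ℝ ((∀ d, Fin (l d)) → ℝ))
    (c : (∀ d, Fin (l d)) → ℝ) : Prop :=
  ∀ (d : Fin D) (A : Matrix (Fin (l d)) (Fin (l d)) ℝ),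
    (bigKron (Function.update (fun d' => (1 : Matrix (Fin (l d')) (Fin (l d')) ℝ)) d A)).mulVec c
      ∈ T

/-- The vertical space `𝕍`. -/
def verticalSet {D : ℕ} {n l : Fin D → ℕ}
    (c : (∀ d, Fin (l d)) → ℝ) (U : ∀ d, Matrix (Fin (n d)) (Fin (l d)) ℝ) :
    Set (((∀ d, Fin (l d)) → ℝ) × (∀ d, Matrix (Fin (n d)) (Fin (l d)) ℝ)) :=
  {z | ∃ Adot : ∀ d, Matrix (Fin (l d)) (Fin (l d)) ℝ,
    z = (∑ d, (bigKron (Function.update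
              (fun d' => (1 : Matrix (Fin (l d')) (Fin (l d')) ℝ)) d (Adot d))).mulVec c,
          fun d => -(U d * Adot d))}

/-- The horizontal space `ℍ`. -/
def horizontalSet {D : ℕ} {n l : Fin D → ℕ}
    (T : Submodule ℝ ((∀ d, Fin (l d)) → ℝ))
    (Uperp : ∀ d, Matrix (Fin (n d)) (Fin (n d - l d)) ℝ) :
    Set (((∀ d, Fin (l d)) → ℝ) × (∀ d, Matrix (Fin (n d)) (Fin (l d)) ℝ)) :=
  {z | z.1 ∈ T ∧ ∃ B : ∀ d, Matrix (Fin (n d - l d)) (Fin (l d)) ℝ,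
    z.2 = fun d => Uperp d * B d}

/-!
Since `[U_d  U_d^⊥]` is invertible, every `n_d × l_d` matrix is uniquely of the form
`U_d A + U_d^⊥ B`. Uniqueness forces the `Ȧ_d` of a vector in `𝕍 ∩ ℍ` to vanish, and then the
vector is zero. Existence splits the matrix components of any `z` with `z.1 ∈ 𝒯` as
`-U_d Ȧ_d + U_d^⊥ B_d`; GL-saturation puts the tensor component of the vertical vector built
from the `Ȧ_d` in `𝒯`, so what is left of `z.1` is in `𝒯` as well.
-/

namespace Matrix

variable {m p q r R : Type*} [Fintype p] [Fintype q]

theorem eq_zero_of_fromCols_mul_add_mul_eq_zero [Semiring R] {U : Matrix m p R}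
    {V : Matrix m q R} (hUV : Function.Injective (fromCols U V).mulVec) {A : Matrix p r R}
    {B : Matrix q r R} (h : U * A + V * B = 0) : A = 0 := by
  cases isEmpty_or_nonempty r
  · exact Subsingleton.elim _ _
  have hAB : fromRows A B = fromRows 0 0 := mul_right_injective_iff_mulVec_injective.2 hUV <| by
    simpa only [fromCols_mul_fromRows, fromRows_zero, Matrix.mul_zero] using h
  exact (fromRows_inj hAB).1

theorem exists_fromCols_mul_add_mul_eq [CommRing R] [Fintype m] [DecidableEq m]
    {U : Matrix m p R} {V : Matrix m q R} (hUV : Function.Surjective (fromCols U V).mulVec)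
    (C : Matrix m r R) : ∃ (A : Matrix p r R) (B : Matrix q r R), U * A + V * B = C := by
  obtain ⟨W, hW⟩ := mulVec_surjective_iff_exists_right_inverse.1 hUV
  refine ⟨(W * C).toRows₁, (W * C).toRows₂, ?_⟩
  rw [← fromCols_mul_fromRows, fromRows_toRows, ← Matrix.mul_assoc, hW, Matrix.one_mul]

end Matrix

section Tucker

variable {D : ℕ} {n l : Fin D → ℕ}

theorem bigKron_update_zero (M : ∀ d, Matrix (Fin (n d)) (Fin (l d)) ℝ) (d : Fin D) :
    bigKron (Function.update M d 0) = 0 := by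
  ext i j
  exact Finset.prod_eq_zero (Finset.mem_univ d) (by simp)

def modeProductSum (c : (∀ d, Fin (l d)) → ℝ) (Adot : ∀ d, Matrix (Fin (l d)) (Fin (l d)) ℝ) :
    (∀ d, Fin (l d)) → ℝ :=
  ∑ d, (bigKron (Function.update (fun d' => (1 : Matrix (Fin (l d')) (Fin (l d')) ℝ)) d
    (Adot d))).mulVec c

theorem modeProductSum_zero (c : (∀ d, Fin (l d)) → ℝ) : modeProductSum c 0 = 0 :=
  Finset.sum_eq_zero fun d _ => by
    rw [Pi.zero_apply, bigKron_update_zero, Matrix.zero_mulVec]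

theorem GLSaturated.modeProductSum_mem {T : Submodule ℝ ((∀ d, Fin (l d)) → ℝ)}
    {c : (∀ d, Fin (l d)) → ℝ} (hT : GLSaturated T c)
    (Adot : ∀ d, Matrix (Fin (l d)) (Fin (l d)) ℝ) : modeProductSum c Adot ∈ T :=
  T.sum_mem fun d _ => hT d (Adot d)

variable {c : (∀ d, Fin (l d)) → ℝ} {T : Submodule ℝ ((∀ d, Fin (l d)) → ℝ)}
  {U : ∀ d, Matrix (Fin (n d)) (Fin (l d)) ℝ} {Uperp : ∀ d, Matrix (Fin (n d)) (Fin (n d - l d)) ℝ}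

theorem mem_verticalSet {z : ((∀ d, Fin (l d)) → ℝ) × (∀ d, Matrix (Fin (n d)) (Fin (l d)) ℝ)} :
    z ∈ verticalSet c U ↔ ∃ Adot, z = (modeProductSum c Adot, fun d => -(U d * Adot d)) :=
  Iff.rfl

theorem verticalSet_inter_horizontalSet
    (hUUperp : ∀ d, Function.Injective (Matrix.fromCols (U d) (Uperp d)).mulVec) :
    verticalSet c U ∩ horizontalSet T Uperp = {0} := by
  have hzero : (modeProductSum c 0,
      fun d => -(U d * (0 : ∀ d, Matrix (Fin (l d)) (Fin (l d)) ℝ) d)) = 0 := by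
    simp only [modeProductSum_zero, Pi.zero_apply, Matrix.mul_zero, neg_zero]
    rfl
  refine Set.eq_singleton_iff_unique_mem.2
    ⟨⟨mem_verticalSet.2 ⟨0, hzero.symm⟩, T.zero_mem, 0, funext fun d => (Matrix.mul_zero _).symm⟩,
      ?_⟩
  rintro z ⟨hzV, -, B, hB⟩
  obtain ⟨Adot, rfl⟩ := mem_verticalSet.1 hzV
  obtain rfl : Adot = 0 := funext fun d =>
    Matrix.eq_zero_of_fromCols_mul_add_mul_eq_zero (hUUperp d) (B := B d)
      (neg_eq_iff_add_eq_zero.1 (congrFun hB d))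
  exact hzero

theorem verticalSet_add_horizontalSet (hT : GLSaturated T c)
    (hUUperp : ∀ d, Function.Surjective (Matrix.fromCols (U d) (Uperp d)).mulVec) :
    {z | ∃ v ∈ verticalSet c U, ∃ h ∈ horizontalSet T Uperp, z = v + h}
      = {z : ((∀ d, Fin (l d)) → ℝ) × (∀ d, Matrix (Fin (n d)) (Fin (l d)) ℝ) | z.1 ∈ T} := by
  ext z
  constructor
  · rintro ⟨_, ⟨Adot, rfl⟩, h, ⟨hh, -⟩, rfl⟩
    exact T.add_mem (hT.modeProductSum_mem Adot) hh
  · intro hz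
    choose A B hAB using fun d => Matrix.exists_fromCols_mul_add_mul_eq (hUUperp d) (z.2 d)
    let v := modeProductSum c (-A)
    refine ⟨(v, fun d => -(U d * -A d)), ⟨-A, rfl⟩, (z.1 - v, fun d => Uperp d * B d),
      ⟨T.sub_mem hz (hT.modeProductSum_mem _), B, rfl⟩, ?_⟩
    ext1
    · simp
    · funext d
      simp [← hAB d]

end Tucker

theorem vertical_horizontal_direct_sum_general
    {D : ℕ} (n l : Fin D → ℕ)
    (c : (∀ d, Fin (l d)) → ℝ)
    (T : Submodule ℝ ((∀ d, Fin (l d)) → ℝ))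
    (hT : GLSaturated T c)
    (U : ∀ d, Matrix (Fin (n d)) (Fin (l d)) ℝ)
    (Uperp : ∀ d, Matrix (Fin (n d)) (Fin (n d - l d)) ℝ)
    (hUUperp : ∀ d, Function.Bijective (Matrix.fromCols (U d) (Uperp d)).mulVec) :
    verticalSet c U ∩ horizontalSet T Uperp = {0} ∧
    {z | ∃ v ∈ verticalSet c U, ∃ h ∈ horizontalSet T Uperp, z = v + h}
      = {z : ((∀ d, Fin (l d)) → ℝ) × (∀ d, Matrix (Fin (n d)) (Fin (l d)) ℝ) |
          z.1 ∈ T} :=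
  ⟨verticalSet_inter_horizontalSet fun d => (hUUperp d).1,
    verticalSet_add_horizontalSet hT fun d => (hUUperp d).2⟩

/-- **Proposition 3.2 (linear-algebra formulation).** If `𝒯` is GL-saturated at `c`,
the `U_d` have full column rank, and each `[U_d  U_d^⊥]` is invertible, then the vertical
space `𝕍` and the horizontal space `ℍ` satisfy `𝕍 ∩ ℍ = {0}` and
`𝕍 + ℍ = 𝒯 × ∏_d ℝ^{n_d×l_d}`, i.e. `𝕍 ⊕ ℍ = 𝒯 × ∏_d ℝ^{n_d×l_d}`. -/
theorem vertical_horizontal_direct_sum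
    {D : ℕ} (hD : 1 ≤ D) (n l : Fin D → ℕ) (hnl : ∀ d, l d ≤ n d) (hl : ∀ d, 1 ≤ l d)
    (c : (∀ d, Fin (l d)) → ℝ)
    (T : Submodule ℝ ((∀ d, Fin (l d)) → ℝ))
    (hT : GLSaturated T c)
    (U : ∀ d, Matrix (Fin (n d)) (Fin (l d)) ℝ)
    (hU : ∀ d, (U d).rank = l d)
    (Uperp : ∀ d, Matrix (Fin (n d)) (Fin (n d - l d)) ℝ)
    (hUUperp : ∀ d, Function.Bijective (Matrix.fromCols (U d) (Uperp d)).mulVec) :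
    verticalSet c U ∩ horizontalSet T Uperp = {0} ∧
    {z | ∃ v ∈ verticalSet c U, ∃ h ∈ horizontalSet T Uperp, z = v + h}
      = {z : ((∀ d, Fin (l d)) → ℝ) × (∀ d, Matrix (Fin (n d)) (Fin (l d)) ℝ) |
          z.1 ∈ T} :=
  vertical_horizontal_direct_sum_general n l c T hT U Uperp hUUperp

end
end
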